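/- For real λ, θ₀, θ_L, L with λ ≠ i θ_L and λ ≠ i θ₀ (viewed in ℂ), the function f(x) = λ cos(λx) + θ₀ sin(λx) satisfies (d/dx + θ_L) f(x) = 0 at x = L if and only if e^{2iLλ} = ((λ + iθ_L)(λ + iθ₀)) / ((λ − iθ_L)(λ − iθ₀)). -/
import Mathlib


open Complex

theorem stmt_1 (lam th0 thL L : ℝ)
    (hden : ((lam : ℂ) - I * thL) * ((lam : ℂ) - I * th0) ≠ 0) :
    deriv (fun x : ℂ => (lam : ℂ) * Complex.cos (lam * x) + (th0 : ℂ) * Complex.sin (lam * x)) L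
        + (thL : ℂ) * ((lam : ℂ) * Complex.cos (lam * L) + (th0 : ℂ) * Complex.sin (lam * L)) = 0
      ↔ Complex.exp (2 * I * L * lam)
          = (((lam : ℂ) + I * thL) * ((lam : ℂ) + I * th0))
              / (((lam : ℂ) - I * thL) * ((lam : ℂ) - I * th0)) := by
  have h1 : HasDerivAt (fun x : ℂ => (lam : ℂ) * x) (lam : ℂ) (L : ℂ) := by
    simpa using (hasDerivAt_id (L : ℂ)).const_mul (lam : ℂ)
  have hd : HasDerivAt
      (fun x : ℂ => (lam : ℂ) * Complex.cos (lam * x) + (th0 : ℂ) * Complex.sin (lam * x))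
      ((lam : ℂ) * (-Complex.sin ((lam : ℂ) * L) * lam)
        + (th0 : ℂ) * (Complex.cos ((lam : ℂ) * L) * lam)) (L : ℂ) :=
    ((((Complex.hasDerivAt_cos ((lam : ℂ) * L)).comp (L : ℂ) h1).const_mul (lam : ℂ)).add
      (((Complex.hasDerivAt_sin ((lam : ℂ) * L)).comp (L : ℂ) h1).const_mul (th0 : ℂ)))
  rw [hd.deriv]
  set u := Complex.exp ((lam : ℂ) * L * I) with hu_def
  set v := Complex.exp (-((lam : ℂ) * L) * I) with hv_def
  have huv : u * v = 1 := by
    rw [hu_def, hv_def, ← Complex.exp_add]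
    ring_nf
    exact Complex.exp_zero
  have hu : u ≠ 0 := Complex.exp_ne_zero _
  have h2 : Complex.exp (2 * I * L * lam) = u * u := by
    rw [hu_def, ← Complex.exp_add]
    ring_nf
  have hcos : Complex.cos ((lam : ℂ) * L) = (u + v) / 2 := by
    rw [← Complex.two_cos]; ring
  have hsin : Complex.sin ((lam : ℂ) * L) = ((v - u) * I) / 2 := by
    rw [← Complex.two_sin]; ring
  have hI : I ^ 2 = (-1 : ℂ) := Complex.I_sq
  rw [h2, hcos, hsin, eq_div_iff hden]
  constructor
  · intro h
    linear_combination (-2 * I * u) * h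
      + (((lam : ℂ) + I * thL) * ((lam : ℂ) + I * th0)) * huv
      + ((lam : ℂ) ^ 2 * u ^ 2 - (lam : ℂ) ^ 2 * u * v) * hI
  · intro h
    have h2iu : (-2 * I * u) ≠ 0 := by
      simp [hu, Complex.I_ne_zero]
    have key : (-2 * I * u) *
        ((lam : ℂ) * (-(((v - u) * I) / 2) * lam) + (th0 : ℂ) * ((u + v) / 2 * lam)
          + (thL : ℂ) * ((lam : ℂ) * ((u + v) / 2) + (th0 : ℂ) * (((v - u) * I) / 2)))
        = (-2 * I * u) * 0 := by
      rw [mul_zero]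
      linear_combination h - (((lam : ℂ) + I * thL) * ((lam : ℂ) + I * th0)) * huv
        + ((lam : ℂ) ^ 2 * u * v - (lam : ℂ) ^ 2 * u ^ 2) * hI
    exact mul_left_cancel₀ h2iu key
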